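/- arXiv:2203.02082 — 6 statements merged into one kernel-verified Lean document; each statement's English description precedes it below -/
import Mathlib

section
/- For every natural number n ≥ 1, the identity ∑_{k=0}^{⌊n/2⌋} (n!)² / (2^{2k} · (k!)² · (n-2k)!) = (2n-1)!! holds. -/
open Nat

noncomputable def brA (n k : ℕ) : ℚ :=
  (n ! : ℚ) ^ 2 / ((2 : ℚ) ^ (2 * k) * ((k ! : ℚ)) ^ 2 * ((n - 2 * k)! : ℚ))

lemma brA_zero (n : ℕ) : brA n 0 = (n ! : ℚ) := by
  have h : ((n !:ℚ)) ≠ 0 := Nat.cast_ne_zero.mpr n.factorial_ne_zero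
  simp [brA, sq]

lemma brA_rec (n k : ℕ) (h : 2*(k+1) ≤ n) :
    brA (n+1) (k+1) = ((n:ℚ)+3+2*k) * brA n (k+1) + ((n:ℚ)-2*k) * brA n k := by
  obtain ⟨a, rfl⟩ : ∃ a, n = 2*k+2+a := ⟨n - (2*k+2), by omega⟩
  have e1 : 2*k+2+a+1 - 2*(k+1) = a+1 := by omega
  have e2 : 2*k+2+a - 2*(k+1) = a := by omega
  have e3 : 2*k+2+a - 2*k = a+2 := by omega
  have e4 : 2*k+2+a+1 = (2*k+2+a)+1 := by omega
  simp only [brA, e1, e2, e3, e4]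
  rw [Nat.factorial_succ (2*k+2+a), Nat.factorial_succ (a+1), Nat.factorial_succ a,
    Nat.factorial_succ k]
  have hX : ((2*k+2+a)! : ℚ) ≠ 0 := Nat.cast_ne_zero.mpr (Nat.factorial_ne_zero _)
  have ha : ((a)! : ℚ) ≠ 0 := Nat.cast_ne_zero.mpr (Nat.factorial_ne_zero _)
  have hk : ((k)! : ℚ) ≠ 0 := Nat.cast_ne_zero.mpr (Nat.factorial_ne_zero _)
  push_cast
  field_simp
  ring

lemma brA_boundary (t : ℕ) : brA (2*t+2) (t+1) = brA (2*t+1) t := by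
  have e1 : 2*t+2 - 2*(t+1) = 0 := by omega
  have e2 : 2*t+1 - 2*t = 1 := by omega
  simp only [brA, e1, e2]
  rw [show 2*t+2 = (2*t+1)+1 by ring, Nat.factorial_succ (2*t+1), Nat.factorial_succ t]
  have hX : ((2*t+1)! : ℚ) ≠ 0 := Nat.cast_ne_zero.mpr (Nat.factorial_ne_zero _)
  have hk : ((t)! : ℚ) ≠ 0 := Nat.cast_ne_zero.mpr (Nat.factorial_ne_zero _)
  push_cast
  field_simp
  ring

lemma brA_sum_step (n : ℕ) (hn : 1 ≤ n) :
    ∑ k ∈ Finset.range ((n+1)/2 + 1), brA (n+1) k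
      = ((2*n+1 : ℕ) : ℚ) * ∑ k ∈ Finset.range (n/2 + 1), brA n k := by
  have key : ((2*n+1 : ℕ):ℚ) * ∑ k ∈ Finset.range (n/2 + 1), brA n k
      = (∑ k ∈ Finset.range (n/2 + 1), ((n:ℚ)+1+2*k) * brA n k)
        + ∑ k ∈ Finset.range (n/2 + 1), ((n:ℚ)-2*k) * brA n k := by
    rw [← Finset.sum_add_distrib, Finset.mul_sum]
    refine Finset.sum_congr rfl fun k _ => ?_
    push_cast; ring
  rw [key]
  have h0 : brA (n+1) 0 = ((n:ℚ)+1) * brA n 0 := by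
    rw [brA_zero, brA_zero, Nat.factorial_succ]; push_cast; ring
  rcases Nat.even_or_odd n with ⟨t, ht⟩ | ⟨t, ht⟩
  · -- n = t + t even, t ≥ 1
    have ht1 : 1 ≤ t := by omega
    have h1 : (n + 1)/2 = t := by omega
    have h2 : n/2 = t := by omega
    rw [h1, h2]
    rw [Finset.sum_range_succ' (fun k => brA (n+1) k) t]
    have lhs_eq : ∑ k ∈ Finset.range t, brA (n+1) (k+1)
        = ∑ k ∈ Finset.range t,
            (((n:ℚ)+3+2*k) * brA n (k+1) + ((n:ℚ)-2*k) * brA n k) := by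
      refine Finset.sum_congr rfl fun k hk => ?_
      exact brA_rec n k (by have := Finset.mem_range.mp hk; omega)
    rw [lhs_eq, Finset.sum_add_distrib, h0]
    rw [Finset.sum_range_succ' (fun k => ((n:ℚ)+1+2*k) * brA n k) t,
        Finset.sum_range_succ (fun k => ((n:ℚ)-2*k) * brA n k) t]
    have hz : ((n:ℚ) - 2*t) * brA n t = 0 := by
      have : (n:ℚ) = 2*t := by rw [ht]; push_cast; ring
      rw [this]; ring
    rw [hz, Finset.sum_congr rfl
      (fun x (_ : x ∈ Finset.range t) => by push_cast; ring :
        ∀ x ∈ Finset.range t,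
          ((n:ℚ)+1+2*((x+1:ℕ):ℚ)) * brA n (x+1) = ((n:ℚ)+3+2*(x:ℚ)) * brA n (x+1))]
    ring
  · -- n = 2t+1 odd
    have h1 : (n + 1)/2 = t + 1 := by omega
    have h2 : n/2 = t := by omega
    rw [h1, h2]
    rw [Finset.sum_range_succ' (fun k => brA (n+1) k) (t+1),
        Finset.sum_range_succ (fun k => brA (n+1) (k+1)) t]
    have hb : brA (n+1) (t+1) = brA n t := by
      rw [show n+1 = 2*t+2 by omega, show n = 2*t+1 from ht]
      exact brA_boundary t
    have lhs_eq : ∑ k ∈ Finset.range t, brA (n+1) (k+1)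
        = ∑ k ∈ Finset.range t,
            (((n:ℚ)+3+2*k) * brA n (k+1) + ((n:ℚ)-2*k) * brA n k) := by
      refine Finset.sum_congr rfl fun k hk => ?_
      exact brA_rec n k (by have := Finset.mem_range.mp hk; omega)
    rw [lhs_eq, Finset.sum_add_distrib, h0, hb]
    rw [Finset.sum_range_succ' (fun k => ((n:ℚ)+1+2*k) * brA n k) t,
        Finset.sum_range_succ (fun k => ((n:ℚ)-2*k) * brA n k) t]
    have hz : ((n:ℚ) - 2*t) * brA n t = brA n t := by
      have : (n:ℚ) = 2*t+1 := by rw [ht]; push_cast; ring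
      rw [this]; ring
    rw [hz, Finset.sum_congr rfl
      (fun x (_ : x ∈ Finset.range t) => by push_cast; ring :
        ∀ x ∈ Finset.range t,
          ((n:ℚ)+1+2*((x+1:ℕ):ℚ)) * brA n (x+1) = ((n:ℚ)+3+2*(x:ℚ)) * brA n (x+1))]
    ring

/-- For `n ≥ 1`, `∑_{k=0}^{⌊n/2⌋} (n!)² / (2^{2k} (k!)² (n-2k)!) = (2n-1)‼`. -/
theorem brauer_dimension_identity (n : ℕ) (hn : 1 ≤ n) :
    ∑ k ∈ Finset.range (n / 2 + 1),
      ((n ! : ℚ) ^ 2 / ((2 : ℚ) ^ (2 * k) * ((k ! : ℚ)) ^ 2 * ((n - 2 * k)! : ℚ))) =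
      ((2 * n - 1)‼ : ℚ) := by
  have main : ∀ m : ℕ, 1 ≤ m →
      ∑ k ∈ Finset.range (m / 2 + 1), brA m k = (((2 * m - 1)‼ : ℕ) : ℚ) := by
    intro m hm
    induction m, hm using Nat.le_induction with
    | base => simp [brA]
    | succ m hm ih =>
      rw [brA_sum_step m hm, ih]
      rw [show 2 * (m + 1) - 1 = (2 * m - 1) + 2 by omega,
        Nat.doubleFactorial_add_two, show 2 * m - 1 + 2 = 2 * m + 1 by omega]
      push_cast
      ring
  exact main n hn
end

section
/- For 0 ≤ k ≤ ⌊n/2⌋, the set B_k^* of elements of S_n of the form t_{n-1} t_{n-2} ··· t_{2k} · t_{2k-2} t_{2k-4} ··· t_2, where each t_j is either 1 or s_{i_j,j} for some 1 ≤ i_j ≤ j, has exactly n!/(2^k · k!) elements. -/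
/-! Every admissible factor `t_j` (that is, `1` or some `s_{i,j}`) fixes the points of `Fin n`
above `j`, and the `j + 1` admissible factors are told apart by their value at `j`: `1` fixes it
and `s_{i,j}` sends it to `i - 1`. As the indices `n-1, …, 2k, 2k-2, …, 2` strictly decrease,
evaluating a product at its leading index recovers its first factor, so distinct choices give
distinct products and `B_k^*` has `∏ j, (j + 1)` elements. That product is
`n! / (2k)! · (2k-1)‼`, and `(2k)! = (2k)‼ · (2k-1)‼ = 2^k k! · (2k-1)‼`. -/

/-- The simple transposition `s_i = (i, i+1)` (1-based) in the symmetric group on `n` letters,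
realized as a permutation of `Fin n`; it is the identity for out-of-range indices. -/
def sgen (n i : ℕ) : Equiv.Perm (Fin n) :=
  if h : 1 ≤ i ∧ i < n then Equiv.swap ⟨i - 1, by omega⟩ ⟨i, h.2⟩ else 1

/-- The product `s_{i,j} = s_i s_{i+1} ⋯ s_j` (for `i ≤ j`). -/
def sij (n i j : ℕ) : Equiv.Perm (Fin n) :=
  ((List.range (j + 1 - i)).map fun t => sgen n (i + t)).prod

/-- The decreasing list of indices `n-1, n-2, …, 2k, 2k-2, 2k-4, …, 2` used in the
definition of `B_k^*`. -/
def jlist (n k : ℕ) : List ℕ :=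
  ((List.range (n - 2 * k)).map fun t => n - 1 - t) ++
    ((List.range (k - 1)).map fun t => 2 * k - 2 - 2 * t)

open Equiv Set

lemma sgen_apply_of_lt {n i : ℕ} {x : Fin n} (h : i < x) : sgen n i x = x := by
  unfold sgen
  split
  · exact swap_apply_of_ne_of_ne (Fin.ne_of_val_ne (by dsimp only; omega))
      (Fin.ne_of_val_ne (by dsimp only; omega))
  · rfl

lemma sgen_apply_self {n i : ℕ} (hi : 1 ≤ i) (hn : i < n) :
    sgen n i ⟨i, hn⟩ = ⟨i - 1, by omega⟩ := by
  rw [sgen, dif_pos ⟨hi, hn⟩, swap_apply_right]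

lemma sij_apply_of_lt {n i j : ℕ} {x : Fin n} (h : j < x) : sij n i j x = x := by
  rw [← Perm.smul_def, ← MulAction.mem_stabilizer_iff]
  refine Subgroup.list_prod_mem _ fun p hp => ?_
  obtain ⟨t, ht, rfl⟩ := List.mem_map.mp hp
  rw [List.mem_range] at ht
  exact MulAction.mem_stabilizer_iff.mpr (sgen_apply_of_lt (by omega))

lemma sij_of_lt {n i j : ℕ} (h : j < i) : sij n i j = 1 := by
  rw [sij, Nat.sub_eq_zero_of_le h, List.range_zero, List.map_nil, List.prod_nil]

lemma sij_eq_sgen_mul {n i j : ℕ} (h : i ≤ j) : sij n i j = sgen n i * sij n (i + 1) j := by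
  rw [sij, sij, show j + 1 - i = j + 1 - (i + 1) + 1 by omega, List.prod_range_succ']
  simp only [Nat.add_zero, Nat.succ_eq_add_one, ← Nat.add_assoc, Nat.add_right_comm i 1]

lemma sij_apply_self {n i j : ℕ} (hi : 1 ≤ i) (hij : i ≤ j) (hj : j < n) :
    sij n i j ⟨j, hj⟩ = ⟨i - 1, by omega⟩ := by
  induction hij using Nat.decreasingInduction with
  | self => rw [sij_eq_sgen_mul le_rfl, sij_of_lt (Nat.lt_succ_self j), mul_one,
      sgen_apply_self hi hj]
  | of_succ i hij ih =>
    rw [sij_eq_sgen_mul hij.le, Perm.mul_apply, ih (by omega)]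
    exact sgen_apply_self hi (by omega)

def segmentFactors (n j : ℕ) : Set (Perm (Fin n)) :=
  {τ | τ = 1 ∨ ∃ i, 1 ≤ i ∧ i ≤ j ∧ τ = sij n i j}

def segmentProducts (n : ℕ) (l : List ℕ) : Set (Perm (Fin n)) :=
  {w | ∃ t : ℕ → Perm (Fin n), (∀ j ∈ l, t j ∈ segmentFactors n j) ∧ (l.map t).prod = w}

lemma apply_of_mem_segmentFactors_of_lt {n j : ℕ} {τ : Perm (Fin n)} {x : Fin n}
    (hτ : τ ∈ segmentFactors n j) (h : j < x) : τ x = x := by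
  obtain rfl | ⟨i, -, -, rfl⟩ := hτ
  · rfl
  · exact sij_apply_of_lt h

lemma apply_of_mem_segmentProducts_of_lt {n : ℕ} {l : List ℕ} {w : Perm (Fin n)} {x : Fin n}
    (hw : w ∈ segmentProducts n l) (h : ∀ j ∈ l, j < x) : w x = x := by
  obtain ⟨t, ht, rfl⟩ := hw
  rw [← Perm.smul_def, ← MulAction.mem_stabilizer_iff]
  refine Subgroup.list_prod_mem _ fun p hp => ?_
  obtain ⟨j, hj, rfl⟩ := List.mem_map.mp hp
  exact MulAction.mem_stabilizer_iff.mpr (apply_of_mem_segmentFactors_of_lt (ht j hj) (h j hj))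

lemma injOn_segmentFactors {n j : ℕ} (hj : j < n) :
    (segmentFactors n j).InjOn fun τ => τ ⟨j, hj⟩ := by
  rintro τ (rfl | ⟨i, hi, hij, rfl⟩) τ' (rfl | ⟨i', hi', hij', rfl⟩) h <;>
    simp only [Perm.one_apply, sij_apply_self, *, Fin.mk.injEq] at h
  · rfl
  · omega
  · omega
  · rw [show i = i' by omega]

lemma image_segmentFactors {n j : ℕ} (hj : j < n) :
    (fun τ => τ ⟨j, hj⟩) '' segmentFactors n j = Iic ⟨j, hj⟩ := by
  ext x
  simp only [mem_image, mem_Iic, Fin.le_def]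
  constructor
  · rintro ⟨τ, rfl | ⟨i, hi, hij, rfl⟩, rfl⟩
    · exact le_rfl
    · rw [sij_apply_self hi hij hj]
      exact Nat.sub_le_of_le_add (by omega)
  · intro hx
    rcases hx.lt_or_eq with hx | hx
    · exact ⟨sij n (x + 1) j, Or.inr ⟨x + 1, by omega, hx, rfl⟩,
        by rw [sij_apply_self (by omega) hx hj]; rfl⟩
    · exact ⟨1, Or.inl rfl, Fin.ext hx.symm⟩

lemma ncard_segmentFactors {n j : ℕ} (hj : j < n) : (segmentFactors n j).ncard = j + 1 := by
  rw [← (injOn_segmentFactors hj).ncard_image, image_segmentFactors hj, ← Finset.coe_Iic,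
    ncard_coe_finset, Fin.card_Iic]

lemma Equiv.Perm.ncard_image2_mul_of_injOn_of_fixed {α : Type*} {A B : Set (Perm α)} (x : α)
    (hA : A.InjOn fun a => a x) (hB : ∀ b ∈ B, b x = x) :
    (image2 (· * ·) A B).ncard = A.ncard * B.ncard := by
  rw [← image_uncurry_prod, InjOn.ncard_image, ncard_prod]
  rintro ⟨a, b⟩ ⟨ha, hb⟩ ⟨a', b'⟩ ⟨ha', hb'⟩ h
  simp only [Function.uncurry_apply_pair] at h
  have hx : a x = a' x := by
    simpa only [Perm.mul_apply, hB b hb, hB b' hb'] using DFunLike.congr_fun h x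
  obtain rfl := hA ha ha' hx
  rw [mul_left_cancel h]

lemma segmentProducts_nil (n : ℕ) : segmentProducts n [] = {1} := by
  ext w
  simp [segmentProducts, eq_comm]

lemma segmentProducts_cons {n j : ℕ} {l : List ℕ} (hj : j ∉ l) :
    segmentProducts n (j :: l) = image2 (· * ·) (segmentFactors n j) (segmentProducts n l) := by
  ext w
  constructor
  · rintro ⟨t, ht, rfl⟩
    exact ⟨t j, ht j List.mem_cons_self, _, ⟨t, fun i hi => ht i (List.mem_cons_of_mem j hi), rfl⟩,
      List.prod_cons.symm⟩
  · rintro ⟨a, ha, _, ⟨t, ht, rfl⟩, rfl⟩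
    have hmap : l.map (Function.update t j a) = l.map t :=
      List.map_congr_left fun i hi => Function.update_of_ne (ne_of_mem_of_not_mem hi hj) _ _
    refine ⟨Function.update t j a, fun i hi => ?_, ?_⟩
    · rcases List.mem_cons.mp hi with rfl | hi
      · rwa [Function.update_self]
      · rw [Function.update_of_ne (ne_of_mem_of_not_mem hi hj)]
        exact ht i hi
    · rw [List.map_cons, List.prod_cons, hmap, Function.update_self]

lemma ncard_segmentProducts {n : ℕ} {l : List ℕ} (hl : l.Pairwise (· > ·))
    (hn : ∀ j ∈ l, j < n) : (segmentProducts n l).ncard = (l.map (· + 1)).prod := by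
  induction l with
  | nil => simp [segmentProducts_nil]
  | cons j l ih =>
    obtain ⟨hjl, hl⟩ := List.pairwise_cons.mp hl
    have hj : j < n := hn j List.mem_cons_self
    rw [segmentProducts_cons fun h => lt_irrefl j (hjl j h),
      Perm.ncard_image2_mul_of_injOn_of_fixed _ (injOn_segmentFactors hj)
        fun w hw => apply_of_mem_segmentProducts_of_lt hw hjl,
      ncard_segmentFactors hj, ih hl fun i hi => hn i (List.mem_cons_of_mem j hi),
      List.map_cons, List.prod_cons]

lemma jlist_pairwise_gt (n k : ℕ) : (jlist n k).Pairwise (· > ·) := by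
  simp only [jlist, List.pairwise_append, List.pairwise_map, List.mem_map, List.mem_range]
  refine ⟨?_, ?_, by omega⟩ <;>
    exact List.pairwise_lt_range.imp_of_mem fun ha hb _ => by
      rw [List.mem_range] at ha hb; omega

lemma lt_of_mem_jlist {n k j : ℕ} (hk : 2 * k ≤ n) (hj : j ∈ jlist n k) : j < n := by
  simp only [jlist, List.mem_append, List.mem_map, List.mem_range] at hj
  omega

lemma List.prod_map_range {M : Type*} [CommMonoid M] (m : ℕ) (f : ℕ → M) :
    ((List.range m).map f).prod = ∏ i ∈ Finset.range m, f i := by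
  rw [Finset.prod_eq_multiset_prod, Finset.range_val, Multiset.range, Multiset.map_coe,
    Multiset.prod_coe]

open Nat Finset

lemma factorial_two_mul_eq_doubleFactorial_mul (k : ℕ) : (2 * k)! = (2 * k)‼ * (2 * k - 1)‼ := by
  obtain _ | k := k
  · rfl
  · rw [show 2 * (k + 1) = 2 * k + 1 + 1 by ring, factorial_eq_mul_doubleFactorial]
    rfl

lemma jlist_prod_succ {n k : ℕ} (hk : 2 * k ≤ n) :
    ((jlist n k).map (· + 1)).prod * (2 ^ k * k !) = n ! := by
  have hdesc : ∏ t ∈ range (n - 2 * k), (n - 1 - t + 1) = n.descFactorial (n - 2 * k) := by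
    rw [descFactorial_eq_prod_range]
    refine prod_congr rfl fun t ht => ?_
    rw [Finset.mem_range] at ht
    omega
  have hodd : ∏ t ∈ range (k - 1), (2 * k - 2 - 2 * t + 1) = (2 * k - 1)‼ := by
    obtain _ | k := k
    · rfl
    · rw [show 2 * (k + 1) - 1 = 2 * k + 1 by omega, doubleFactorial_eq_prod_odd,
        ← prod_range_reflect]
      refine prod_congr rfl fun t ht => ?_
      rw [Finset.mem_range] at ht
      omega
  rw [jlist, List.map_append, List.prod_append, List.map_map, List.map_map, List.prod_map_range,
    List.prod_map_range]
  simp only [Function.comp_apply]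
  rw [hdesc, hodd]
  calc n.descFactorial (n - 2 * k) * (2 * k - 1)‼ * (2 ^ k * k !)
      = (2 * k)‼ * (2 * k - 1)‼ * n.descFactorial (n - 2 * k) := by
        rw [doubleFactorial_two_mul]; ring
    _ = (n - (n - 2 * k))! * n.descFactorial (n - 2 * k) := by
        rw [← factorial_two_mul_eq_doubleFactorial_mul, Nat.sub_sub_self hk]
    _ = n ! := factorial_mul_descFactorial (Nat.sub_le n _)

/-- For `0 ≤ k ≤ ⌊n/2⌋`, the set `B_k^*` of products
`t_{n-1} t_{n-2} ⋯ t_{2k} t_{2k-2} t_{2k-4} ⋯ t_2`, with each `t_j = 1` or `t_j = s_{i_j, j}`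
for some `1 ≤ i_j ≤ j`, has exactly `n! / (2^k k!)` elements. -/
theorem Bk_star_card (n k : ℕ) (hk : 2 * k ≤ n) :
    Nat.card {w : Equiv.Perm (Fin n) | ∃ t : ℕ → Equiv.Perm (Fin n),
      (∀ j ∈ jlist n k, t j = 1 ∨ ∃ i, 1 ≤ i ∧ i ≤ j ∧ t j = sij n i j) ∧
      ((jlist n k).map t).prod = w} =
      n.factorial / (2 ^ k * k.factorial) := by
  change Nat.card (segmentProducts n (jlist n k)) = _
  rw [Nat.card_coe_set_eq, ncard_segmentProducts (jlist_pairwise_gt n k)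
    fun j hj => lt_of_mem_jlist hk hj, ← jlist_prod_succ hk, Nat.mul_div_cancel _ (by positivity)]
end

section
/- Let A be an associative ℚ(q,z)-algebra with invertible elements H₁, H₂, H₃ satisfying the Hecke relations (Hᵢ - q)(Hᵢ + q⁻¹) = 0, the braid relations HᵢH_{i+1}Hᵢ = H_{i+1}HᵢH_{i+1}, H₁H₃ = H₃H₁, and with an element E such that E·H₁ = q·E, E·H₃ = q·E, and E·H₂H₃ = E·H₂H₁. Then (q - q⁻¹)·E·H₃H₂H₃⁻¹ + (q⁻¹ - q)·E·H₁H₂⁻¹H₁⁻¹ - (q - q⁻¹)²·E = 0. -/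
/-- The indeterminate `q` inside the field `ℚ(q,z)`, realized as `RatFunc (RatFunc ℚ)`
where the inner variable is `q` and the outer one is `z`. -/
noncomputable def qvar : RatFunc (RatFunc ℚ) := RatFunc.C RatFunc.X

/-- The indeterminate `z` inside the field `ℚ(q,z)`. -/
noncomputable def zvar : RatFunc (RatFunc ℚ) := RatFunc.X

/-- In an associative unital `ℚ(q,z)`-algebra with invertible elements `H₁, H₂, H₃`
satisfying the Hecke and braid relations, `H₁H₃ = H₃H₁`, and an element `E` with
`E H₁ = qE`, `E H₃ = qE`, `E H₂ H₃ = E H₂ H₁`, one has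
`(q - q⁻¹) E H₃ H₂ H₃⁻¹ + (q⁻¹ - q) E H₁ H₂⁻¹ H₁⁻¹ - (q - q⁻¹)² E = 0`. -/
theorem qBrauer_bar_key_identity (A : Type*) [Ring A]
    [Algebra (RatFunc (RatFunc ℚ)) A] (H1 H2 H3 : Aˣ) (E : A)
    (hq1 : ((H1 : A) - algebraMap (RatFunc (RatFunc ℚ)) A qvar) *
        ((H1 : A) + algebraMap (RatFunc (RatFunc ℚ)) A qvar⁻¹) = 0)
    (hq2 : ((H2 : A) - algebraMap (RatFunc (RatFunc ℚ)) A qvar) *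
        ((H2 : A) + algebraMap (RatFunc (RatFunc ℚ)) A qvar⁻¹) = 0)
    (hq3 : ((H3 : A) - algebraMap (RatFunc (RatFunc ℚ)) A qvar) *
        ((H3 : A) + algebraMap (RatFunc (RatFunc ℚ)) A qvar⁻¹) = 0)
    (hb12 : (H1 : A) * (H2 : A) * (H1 : A) = (H2 : A) * (H1 : A) * (H2 : A))
    (hb23 : (H2 : A) * (H3 : A) * (H2 : A) = (H3 : A) * (H2 : A) * (H3 : A))
    (hc13 : (H1 : A) * (H3 : A) = (H3 : A) * (H1 : A))
    (hE1 : E * (H1 : A) = algebraMap (RatFunc (RatFunc ℚ)) A qvar * E)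
    (hE3 : E * (H3 : A) = algebraMap (RatFunc (RatFunc ℚ)) A qvar * E)
    (hE23 : E * (H2 : A) * (H3 : A) = E * (H2 : A) * (H1 : A)) :
    algebraMap (RatFunc (RatFunc ℚ)) A (qvar - qvar⁻¹) *
        (E * (H3 : A) * (H2 : A) * ((H3⁻¹ : Aˣ) : A)) +
      algebraMap (RatFunc (RatFunc ℚ)) A (qvar⁻¹ - qvar) *
        (E * (H1 : A) * ((H2⁻¹ : Aˣ) : A) * ((H1⁻¹ : Aˣ) : A)) -
      algebraMap (RatFunc (RatFunc ℚ)) A ((qvar - qvar⁻¹) ^ 2) * E = 0 := by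
  have hq0 : qvar ≠ 0 := by
    unfold qvar
    simpa using (RingHom.injective (RatFunc.C : RatFunc ℚ →+* RatFunc (RatFunc ℚ))).ne
      (a₁ := RatFunc.X) (a₂ := 0) RatFunc.X_ne_zero
  have hqq1 : algebraMap (RatFunc (RatFunc ℚ)) A qvar *
      algebraMap (RatFunc (RatFunc ℚ)) A qvar⁻¹ = 1 := by
    rw [← map_mul, mul_inv_cancel₀ hq0, map_one]
  have hinv : ∀ H : Aˣ, ((H : A) - algebraMap (RatFunc (RatFunc ℚ)) A qvar) *
      ((H : A) + algebraMap (RatFunc (RatFunc ℚ)) A qvar⁻¹) = 0 →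
      ((H⁻¹ : Aˣ) : A) = (H : A) - algebraMap (RatFunc (RatFunc ℚ)) A (qvar - qvar⁻¹) := by
    intro H hq
    have key : (H : A) * ((H : A) - algebraMap (RatFunc (RatFunc ℚ)) A (qvar - qvar⁻¹)) = 1 := by
      have e : (H : A) * ((H : A) - algebraMap (RatFunc (RatFunc ℚ)) A (qvar - qvar⁻¹)) =
          ((H : A) - algebraMap (RatFunc (RatFunc ℚ)) A qvar) *
            ((H : A) + algebraMap (RatFunc (RatFunc ℚ)) A qvar⁻¹) +
          algebraMap (RatFunc (RatFunc ℚ)) A qvar * algebraMap (RatFunc (RatFunc ℚ)) A qvar⁻¹ := by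
        rw [map_sub, sub_mul, mul_add, mul_add, Algebra.commutes qvar ((H : A))]
        noncomm_ring
      rw [e, hq, zero_add, hqq1]
    exact Units.inv_eq_of_mul_eq_one_right key
  rw [hinv H1 hq1, hinv H2 hq2, hinv H3 hq3, hE3, hE1]
  simp only [Algebra.algebraMap_eq_smul_one, smul_mul_assoc, mul_smul_comm, one_mul, mul_one,
    smul_smul, mul_sub, sub_mul, smul_sub, sub_smul, mul_add, add_mul, smul_add, add_smul]
  rw [hE23, hE1]
  simp only [Algebra.algebraMap_eq_smul_one, smul_mul_assoc, mul_smul_comm, one_mul, mul_one,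
    smul_smul, smul_sub, sub_smul, smul_add, add_smul]
  simp only [pow_two, mul_sub, sub_mul, sub_smul, add_smul, smul_sub, smul_add, smul_smul,
    mul_assoc, mul_inv_cancel₀ hq0, inv_mul_cancel₀ hq0, mul_inv_cancel_left₀ hq0,
    inv_mul_cancel_left₀ hq0, one_mul, mul_one, one_smul]
  abel
end

section
/- Let A be an associative ℚ(q,z)-algebra with invertible elements H_{2k-1}, H_{2k}, H_{2k+1} satisfying the Hecke relations (Hᵢ - q)(Hᵢ + q⁻¹) = 0 and braid relations where applicable, and an element E with E·H_{2k-1} = H_{2k-1}·E = qE, E·H_{2k+1} = H_{2k+1}·E = qE, E·H_{2k}·E = z·((z-z⁻¹)/(q-q⁻¹))^{k-1}·E, E·H_{2k-1}H_{2k}⁻¹H_{2k-1}⁻¹·E = E·H_{2k}⁻¹·E, and H_{2k+1}·(E·H_{2k}·E)·H_{2k+1}⁻¹ = E·H_{2k}·E. Then E·H_{2k}⁻¹H_{2k+1}⁻¹H_{2k-1}H_{2k}·E = E·H_{2k}⁻¹H_{2k+1}H_{2k-1}⁻¹H_{2k}·E. -/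
lemma qvar_ne_zero : qvar ≠ 0 := by simp [qvar, RatFunc.X_ne_zero]

section

variable {K A : Type*} [Field K] [Ring A] [Algebra K A] {q : K}

lemma Units.val_inv_eq_sub_of_hecke (hq : q ≠ 0) (H : Aˣ)
    (hH : ((H : A) - algebraMap K A q) * ((H : A) + algebraMap K A q⁻¹) = 0) :
    ((H⁻¹ : Aˣ) : A) = H - algebraMap K A (q - q⁻¹) := by
  refine Units.inv_eq_of_mul_eq_one_right ?_
  have hqq : algebraMap K A q * algebraMap K A q⁻¹ = 1 := by
    rw [← map_mul, mul_inv_cancel₀ hq, map_one]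
  calc (H : A) * (H - algebraMap K A (q - q⁻¹))
      = ((H : A) - algebraMap K A q) * ((H : A) + algebraMap K A q⁻¹)
          + algebraMap K A q * algebraMap K A q⁻¹
          + (algebraMap K A q * H - H * algebraMap K A q) := by
        rw [map_sub]; noncomm_ring
    _ = 1 := by rw [hH, hqq, Algebra.commutes, sub_self, zero_add, add_zero]

lemma Units.inv_mul_eq_of_mul_eq_algebraMap_mul (hq : q ≠ 0) (X : Aˣ) {E : A}
    (hXE : (X : A) * E = algebraMap K A q * E) :
    ((X⁻¹ : Aˣ) : A) * E = algebraMap K A q⁻¹ * E := by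
  rw [Units.inv_mul_eq_iff_eq_mul, Algebra.left_comm, hXE, ← mul_assoc, ← map_mul,
    inv_mul_cancel₀ hq, map_one, one_mul]

lemma mul_inv_mul_mul_mul_eq_of_braid (hq : q ≠ 0) (X Y : Aˣ) {E : A}
    (hbraid : (Y : A) * X * Y = X * Y * X)
    (hEX : E * X = algebraMap K A q * E) (hXE : (X : A) * E = algebraMap K A q * E) :
    E * ((Y⁻¹ : Aˣ) : A) * X * Y * E = E * Y * E := by
  have hconj : ((Y⁻¹ : Aˣ) : A) * X * Y = X * Y * ((X⁻¹ : Aˣ) : A) := by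
    rw [mul_assoc, Units.inv_mul_eq_iff_eq_mul, ← mul_assoc, ← mul_assoc, hbraid,
      Units.mul_inv_cancel_right]
  calc E * ((Y⁻¹ : Aˣ) : A) * X * Y * E
      = E * X * Y * (((X⁻¹ : Aˣ) : A) * E) := by
        simpa only [mul_assoc] using congrArg (E * · * E) hconj
    _ = E * Y * E := by
        rw [Units.inv_mul_eq_of_mul_eq_algebraMap_mul hq X hXE, hEX]
        simp only [← Algebra.smul_def, smul_mul_assoc, mul_smul_comm, smul_smul,
          inv_mul_cancel₀ hq, one_smul]

end

theorem qBrauer_ek_bar_identity_general (A : Type*) [Ring A]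
    [Algebra (RatFunc (RatFunc ℚ)) A]
    (Ha Hb Hc : Aˣ) (E : A)
    (hqa : ((Ha : A) - algebraMap (RatFunc (RatFunc ℚ)) A qvar) *
        ((Ha : A) + algebraMap (RatFunc (RatFunc ℚ)) A qvar⁻¹) = 0)
    (hqc : ((Hc : A) - algebraMap (RatFunc (RatFunc ℚ)) A qvar) *
        ((Hc : A) + algebraMap (RatFunc (RatFunc ℚ)) A qvar⁻¹) = 0)
    (hbab : (Ha : A) * (Hb : A) * (Ha : A) = (Hb : A) * (Ha : A) * (Hb : A))
    (hbbc : (Hb : A) * (Hc : A) * (Hb : A) = (Hc : A) * (Hb : A) * (Hc : A))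
    (hEa : E * (Ha : A) = algebraMap (RatFunc (RatFunc ℚ)) A qvar * E)
    (haE : (Ha : A) * E = algebraMap (RatFunc (RatFunc ℚ)) A qvar * E)
    (hEc : E * (Hc : A) = algebraMap (RatFunc (RatFunc ℚ)) A qvar * E)
    (hcE : (Hc : A) * E = algebraMap (RatFunc (RatFunc ℚ)) A qvar * E) :
    E * ((Hb⁻¹ : Aˣ) : A) * ((Hc⁻¹ : Aˣ) : A) * (Ha : A) * (Hb : A) * E =
      E * ((Hb⁻¹ : Aˣ) : A) * (Hc : A) * ((Ha⁻¹ : Aˣ) : A) * (Hb : A) * E := by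
  have hA := mul_inv_mul_mul_mul_eq_of_braid qvar_ne_zero Ha Hb hbab.symm hEa haE
  have hC := mul_inv_mul_mul_mul_eq_of_braid qvar_ne_zero Hc Hb hbbc hEc hcE
  rw [Units.val_inv_eq_sub_of_hecke qvar_ne_zero Hc hqc,
    Units.val_inv_eq_sub_of_hecke qvar_ne_zero Ha hqa]
  simp only [mul_sub, sub_mul, ← Algebra.smul_def, smul_mul_assoc, mul_smul_comm, mul_assoc]
    at hA hC ⊢
  rw [hA, hC]

/-- Abstract version of equation (3.6): with `Ha = H_{2k-1}`, `Hb = H_{2k}`,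
`Hc = H_{2k+1}` and `E = e_{(k)}` satisfying the listed identities of Lemma 2.6,
one has `E Hb⁻¹ Hc⁻¹ Ha Hb E = E Hb⁻¹ Hc Ha⁻¹ Hb E`. -/
theorem qBrauer_ek_bar_identity (A : Type*) [Ring A]
    [Algebra (RatFunc (RatFunc ℚ)) A] (k : ℕ) (hk : 1 ≤ k)
    (Ha Hb Hc : Aˣ) (E : A)
    (hqa : ((Ha : A) - algebraMap (RatFunc (RatFunc ℚ)) A qvar) *
        ((Ha : A) + algebraMap (RatFunc (RatFunc ℚ)) A qvar⁻¹) = 0)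
    (hqb : ((Hb : A) - algebraMap (RatFunc (RatFunc ℚ)) A qvar) *
        ((Hb : A) + algebraMap (RatFunc (RatFunc ℚ)) A qvar⁻¹) = 0)
    (hqc : ((Hc : A) - algebraMap (RatFunc (RatFunc ℚ)) A qvar) *
        ((Hc : A) + algebraMap (RatFunc (RatFunc ℚ)) A qvar⁻¹) = 0)
    (hbab : (Ha : A) * (Hb : A) * (Ha : A) = (Hb : A) * (Ha : A) * (Hb : A))
    (hbbc : (Hb : A) * (Hc : A) * (Hb : A) = (Hc : A) * (Hb : A) * (Hc : A))
    (hac : (Ha : A) * (Hc : A) = (Hc : A) * (Ha : A))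
    (hEa : E * (Ha : A) = algebraMap (RatFunc (RatFunc ℚ)) A qvar * E)
    (haE : (Ha : A) * E = algebraMap (RatFunc (RatFunc ℚ)) A qvar * E)
    (hEc : E * (Hc : A) = algebraMap (RatFunc (RatFunc ℚ)) A qvar * E)
    (hcE : (Hc : A) * E = algebraMap (RatFunc (RatFunc ℚ)) A qvar * E)
    (hEbE : E * (Hb : A) * E =
      algebraMap (RatFunc (RatFunc ℚ)) A
        (zvar * ((zvar - zvar⁻¹) / (qvar - qvar⁻¹)) ^ (k - 1)) * E)
    (hconj : E * (Ha : A) * ((Hb⁻¹ : Aˣ) : A) * ((Ha⁻¹ : Aˣ) : A) * E =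
      E * ((Hb⁻¹ : Aˣ) : A) * E)
    (hcomm : (Hc : A) * (E * (Hb : A) * E) * ((Hc⁻¹ : Aˣ) : A) =
      E * (Hb : A) * E) :
    E * ((Hb⁻¹ : Aˣ) : A) * ((Hc⁻¹ : Aˣ) : A) * (Ha : A) * (Hb : A) * E =
      E * ((Hb⁻¹ : Aˣ) : A) * (Hc : A) * ((Ha⁻¹ : Aˣ) : A) * (Hb : A) * E :=
  qBrauer_ek_bar_identity_general A Ha Hb Hc E hqa hqc hbab hbbc hEa haE hEc hcE
end

section
/- Let V = ℚ(q)^m with basis v_1,...,v_m, and for 1 ≤ i ≤ m-1 define the linear operator B_i on V by B_i(v_i) = v_{i+1}, B_i(v_{i+1}) = -q·v_i, and B_i(v_r) = 0 for r ∉ {i, i+1}. Define K_i on V by K_i(v_i) = q v_i, K_i(v_{i+1}) = q⁻¹ v_{i+1}, K_i(v_r) = v_r otherwise, and let the coproduct action of B_i on V ⊗ V be Δ(B_i) = B_i ⊗ K_i⁻¹ + 1 ⊗ B_i. Define E on V ⊗ V by E(v_a ⊗ v_b) = δ_{ab}·∑_{k=1}^m q^{m-2k+1} v_k ⊗ v_k.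 Then Δ(B_i) ∘ E = 0 and E ∘ Δ(B_i) = 0; in particular the actions of B_i and E on V ⊗ V commute. -/
set_option synthInstance.maxHeartbeats 1000000
set_option maxHeartbeats 2000000
open TensorProduct

/-- The indeterminate `q`, generating the field `ℚ(q)` of rational functions. -/
noncomputable def qK : RatFunc ℚ := RatFunc.X

/-- The standard basis `v_1, …, v_m` of `V = ℚ(q)^m` (0-indexed). -/
noncomputable def bV (m : ℕ) : Module.Basis (Fin m) (RatFunc ℚ) (Fin m → RatFunc ℚ) :=
  Pi.basisFun _ _

/-- The basis `v_i ⊗ v_j` of `V ⊗ V`. -/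
noncomputable def bVV (m : ℕ) :
    Module.Basis (Fin m × Fin m) (RatFunc ℚ)
      ((Fin m → RatFunc ℚ) ⊗[RatFunc ℚ] (Fin m → RatFunc ℚ)) :=
  (bV m).tensorProduct (bV m)

/-- The operator `B_i` on `V` (with `a` the index of `v_i` and `b` that of `v_{i+1}`):
`B_i v_i = v_{i+1}`, `B_i v_{i+1} = -q v_i`, `B_i v_r = 0` otherwise. -/
noncomputable def Bop (m : ℕ) (a b : Fin m) :
    (Fin m → RatFunc ℚ) →ₗ[RatFunc ℚ] (Fin m → RatFunc ℚ) :=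
  (bV m).constr (RatFunc ℚ) fun r =>
    if r = a then bV m b else if r = b then (-qK) • bV m a else 0

/-- The operator `K_i⁻¹` on `V`: `K_i⁻¹ v_i = q⁻¹ v_i`, `K_i⁻¹ v_{i+1} = q v_{i+1}`,
`K_i⁻¹ v_r = v_r` otherwise. -/
noncomputable def Kinvop (m : ℕ) (a b : Fin m) :
    (Fin m → RatFunc ℚ) →ₗ[RatFunc ℚ] (Fin m → RatFunc ℚ) :=
  (bV m).constr (RatFunc ℚ) fun r =>
    if r = a then qK⁻¹ • bV m a else if r = b then qK • bV m b else bV m r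

/-- The coproduct action `Δ(B_i) = B_i ⊗ K_i⁻¹ + 1 ⊗ B_i` on `V ⊗ V`. -/
noncomputable def DeltaB (m : ℕ) (a b : Fin m) :
    ((Fin m → RatFunc ℚ) ⊗[RatFunc ℚ] (Fin m → RatFunc ℚ)) →ₗ[RatFunc ℚ]
      ((Fin m → RatFunc ℚ) ⊗[RatFunc ℚ] (Fin m → RatFunc ℚ)) :=
  TensorProduct.map (Bop m a b) (Kinvop m a b) +
    TensorProduct.map LinearMap.id (Bop m a b)

/-- The operator `E` on `V ⊗ V` with `E(v_i ⊗ v_j) = δ_{ij} ∑_{k=1}^m q^{m-2k+1} v_k ⊗ v_k`. -/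
noncomputable def Eop (m : ℕ) :
    ((Fin m → RatFunc ℚ) ⊗[RatFunc ℚ] (Fin m → RatFunc ℚ)) →ₗ[RatFunc ℚ]
      ((Fin m → RatFunc ℚ) ⊗[RatFunc ℚ] (Fin m → RatFunc ℚ)) :=
  (bVV m).constr (RatFunc ℚ) fun p =>
    if p.1 = p.2 then
      ∑ k : Fin m, qK ^ ((m : ℤ) - 2 * ((k : ℕ) : ℤ) - 1) • bVV m (k, k)
    else 0

-- auxiliary lemmas
lemma qK_ne : qK ≠ 0 := RatFunc.X_ne_zero

lemma Bop_apply (m : ℕ) (a b r : Fin m) :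
    Bop m a b (bV m r) =
      if r = a then bV m b else if r = b then (-qK) • bV m a else 0 :=
  Module.Basis.constr_basis _ _ _ _

lemma Kinvop_apply (m : ℕ) (a b r : Fin m) :
    Kinvop m a b (bV m r) =
      if r = a then qK⁻¹ • bV m a else if r = b then qK • bV m b else bV m r :=
  Module.Basis.constr_basis _ _ _ _

lemma DeltaB_tmul (m : ℕ) (a b : Fin m) (x y : Fin m → RatFunc ℚ) :
    DeltaB m a b (x ⊗ₜ y) =
      (Bop m a b x) ⊗ₜ (Kinvop m a b y) + x ⊗ₜ (Bop m a b y) := by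
  simp [DeltaB]

lemma Eop_tmul (m : ℕ) (i j : Fin m) :
    Eop m (bV m i ⊗ₜ bV m j) =
      if i = j then
        ∑ k : Fin m, qK ^ ((m : ℤ) - 2 * ((k : ℕ) : ℤ) - 1) • bVV m (k, k)
      else 0 := by
  rw [show bV m i ⊗ₜ[RatFunc ℚ] bV m j = bVV m (i, j) from
    (Module.Basis.tensorProduct_apply _ _ _ _).symm]
  exact Module.Basis.constr_basis _ _ _ _


/-- `Δ(B_i) ∘ E = 0` and `E ∘ Δ(B_i) = 0`; in particular the actions of `B_i` and `E`
on `V ⊗ V` commute. -/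
theorem DeltaB_Eop_commute (m : ℕ) (hm : 2 ≤ m) (a b : Fin m)
    (hab : (b : ℕ) = (a : ℕ) + 1) :
    DeltaB m a b ∘ₗ Eop m = 0 ∧ Eop m ∘ₗ DeltaB m a b = 0 ∧
    DeltaB m a b ∘ₗ Eop m = Eop m ∘ₗ DeltaB m a b := by
  have hne : a ≠ b := by
    intro h; rw [h] at hab; omega
  have hne' : b ≠ a := hne.symm
  have hq : qK ≠ 0 := qK_ne
  have key1 : DeltaB m a b ∘ₗ Eop m = 0 := by
    refine (bVV m).ext fun p => ?_
    obtain ⟨r, s⟩ := p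
    rw [bVV, Module.Basis.tensorProduct_apply]
    simp only [LinearMap.comp_apply, LinearMap.zero_apply, Eop_tmul]
    split_ifs with h
    · rw [map_sum]
      rw [Finset.sum_eq_add_of_mem a b (Finset.mem_univ _) (Finset.mem_univ _) hne
        (fun c _ hc => by
          rw [map_smul, bVV, Module.Basis.tensorProduct_apply, DeltaB_tmul,
            Bop_apply, if_neg hc.1, if_neg hc.2]
          simp)]
      rw [map_smul, map_smul, bVV, Module.Basis.tensorProduct_apply,
        Module.Basis.tensorProduct_apply, DeltaB_tmul, DeltaB_tmul,
        Bop_apply, Bop_apply, Kinvop_apply, Kinvop_apply,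
        if_pos rfl, if_pos rfl, if_neg hne', if_pos rfl, if_neg hne', if_pos rfl]
      have hbz : ((b : ℕ) : ℤ) = ((a : ℕ) : ℤ) + 1 := by exact_mod_cast hab
      rw [hbz]
      set e : ℤ := (m : ℤ) - 2 * ((a : ℕ) : ℤ) - 1 with he
      have hexp : (m : ℤ) - 2 * (((a : ℕ) : ℤ) + 1) - 1 = e - 2 := by rw [he]; ring
      rw [hexp]
      have c1 : qK ^ e * qK⁻¹ = qK ^ (e - 2) * qK := by
        calc qK ^ e * qK⁻¹ = qK ^ (e + -1) := by rw [zpow_add₀ hq, zpow_neg_one]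
        _ = qK ^ ((e - 2) + 1) := by ring_nf
        _ = qK ^ (e - 2) * qK := by rw [zpow_add₀ hq, zpow_one]
      have c2 : qK ^ (e - 2) * (qK * qK) = qK ^ e := by
        calc qK ^ (e - 2) * (qK * qK) = qK ^ ((e - 2) + (1 + 1)) := by
              rw [zpow_add₀ hq, zpow_add₀ hq, zpow_one]
        _ = qK ^ e := by ring_nf
      rw [smul_add, smul_add]
      rw [tmul_smul, smul_tmul', tmul_smul, smul_tmul']
      simp only [smul_smul, neg_smul, smul_neg, neg_tmul, tmul_neg, mul_neg, neg_mul]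
      rw [c1]
      simp only [smul_tmul', tmul_smul, smul_smul]
      have c2' : qK ^ (e - 2) * qK * qK = qK ^ e := by rw [mul_assoc]; exact c2
      rw [c2']
      abel
    · simp
  have key2 : Eop m ∘ₗ DeltaB m a b = 0 := by
    refine (bVV m).ext fun p => ?_
    obtain ⟨r, s⟩ := p
    rw [bVV, Module.Basis.tensorProduct_apply]
    simp only [LinearMap.comp_apply, LinearMap.zero_apply, DeltaB_tmul,
      Bop_apply, Kinvop_apply]
    by_cases hr : r = a
    · by_cases hs : s = a
      · simp [hr, hs, hne, hne', Eop_tmul, smul_tmul, tmul_smul, tmul_neg, neg_tmul,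
          smul_smul, mul_inv_cancel₀ hq, inv_mul_cancel₀ hq]
      · by_cases hs2 : s = b
        · simp [hr, hs, hs2, hne, hne', Eop_tmul, smul_tmul, tmul_smul, tmul_neg,
            neg_tmul, smul_smul, mul_inv_cancel₀ hq, inv_mul_cancel₀ hq]
        · have hbs : b ≠ s := fun h => hs2 h.symm
          simp [hr, hs, hs2, hbs, hne, hne', Eop_tmul, smul_tmul, tmul_smul, tmul_neg,
            neg_tmul, smul_smul, mul_inv_cancel₀ hq, inv_mul_cancel₀ hq]
    · by_cases hr2 : r = b
      · by_cases hs : s = a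
        · simp [hr2, hs, hne, hne', Eop_tmul, smul_tmul, tmul_smul, tmul_neg, neg_tmul,
            smul_smul, mul_inv_cancel₀ hq, inv_mul_cancel₀ hq]
        · by_cases hs2 : s = b
          · simp [hr2, hs, hs2, hne, hne', Eop_tmul, smul_tmul, tmul_smul, tmul_neg,
              neg_tmul, smul_smul, mul_inv_cancel₀ hq, inv_mul_cancel₀ hq]
          · have has : a ≠ s := fun h => hs h.symm
            simp [hr2, hs, hs2, has, hne, hne', Eop_tmul, smul_tmul, tmul_smul,
              tmul_neg, neg_tmul, smul_smul, mul_inv_cancel₀ hq, inv_mul_cancel₀ hq]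
      · by_cases hs : s = a
        · simp [hr, hr2, hs, hne, hne', Eop_tmul, smul_tmul, tmul_smul, tmul_neg,
            neg_tmul, smul_smul, mul_inv_cancel₀ hq, inv_mul_cancel₀ hq]
        · by_cases hs2 : s = b
          · simp [hr, hr2, hs, hs2, hne, hne', Eop_tmul, smul_tmul, tmul_smul,
              tmul_neg, neg_tmul, smul_smul, mul_inv_cancel₀ hq, inv_mul_cancel₀ hq]
          · simp [hr, hr2, hs, hs2, Eop_tmul]
  exact ⟨key1, key2, by rw [key1, key2]⟩
end

section
/- Let A be a free ℤ[q,q⁻¹]-module with basis {H_d : d ∈ I} indexed by a finite set I equipped with a function ℓ : I → ℕ, and let bar : A → A be a ℤ-linear involution satisfying bar(q·x) = q⁻¹·bar(x) and bar(H_d) = H_d + ∑_{d' : ℓ(d') < ℓ(d)} r_{d',d} H_{d'} with r_{d',d} ∈ ℤ[q,q⁻¹]. Then there exists a unique basis {C_d : d ∈ I} of A ⊗ ℚ(q) such that bar(C_d) = C_d and C_d = H_d + ∑_{d' : ℓ(d') < ℓ(d)} p_{d',d} H_{d'} with p_{d',d} ∈ q⁻¹ℤ[q⁻¹]. -/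
/-!
Write `F n` (`lowerSpan ℓ n`) for the span of the `H_d` with `ℓ d < n`. The hypotheses say
that `bar` preserves each `F n` and acts on `F (n + 1) / F n` by inverting coefficients, `f ↦ f̄`.

Uniqueness: a bar-invariant element of `F (n + 1)` with coefficients in `q⁻¹ℤ[q⁻¹]` has top
coefficients with `f̄ = f`, hence zero, so it lies in `F n`, and by induction it vanishes.

Existence: `C_d = H_d + p` is bar-invariant iff `p - bar p = z := bar H_d - H_d`, and
`bar z = -z`. Such an equation is solvable with `p ∈ F n` having coefficients in `q⁻¹ℤ[q⁻¹]`
whenever `z ∈ F n` is anti-invariant: the top coefficients of `z` satisfy `f̄ = -f`, so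
`f = f⁻ - f̄⁻` with `f⁻` the negative-degree part of `f`; subtracting `u - bar u`, where `u` has
coefficients `f⁻`, lowers `z` into `F (n - 1)`, where induction applies.
-/

open LaurentPolynomial

namespace LaurentPolynomial

variable {R : Type*} [CommRing R]

theorem span_T_neg_eq_supported :
    Submodule.span R {x : R[T;T⁻¹] | ∃ n : ℤ, n ≤ -1 ∧ x = T n} =
      AddMonoidAlgebra.supported R R (Set.Iio 0) := by
  rw [AddMonoidAlgebra.supported_eq_span_single]
  congr 1
  ext x
  simp only [Set.mem_ofPred_eq, Set.mem_image, Set.mem_Iio, T, Int.lt_iff_add_one_le]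
  constructor
  · rintro ⟨n, hn, rfl⟩; exact ⟨n, by omega, rfl⟩
  · rintro ⟨n, hn, rfl⟩; exact ⟨n, by omega, rfl⟩

theorem eq_zero_of_invert_eq_self {f : R[T;T⁻¹]}
    (hf : f ∈ AddMonoidAlgebra.supported R R (Set.Iio 0)) (h : invert f = f) : f = 0 := by
  rw [AddMonoidAlgebra.mem_supported'] at hf
  ext n
  rcases lt_or_ge n 0 with hn | hn
  · rw [← h, invert_apply, hf (-n) (by simp; omega)]
    rfl
  · exact hf n (by simpa using hn)

def negTrunc (f : R[T;T⁻¹]) : R[T;T⁻¹] := .ofCoeff (f.coeff.filter (· < 0))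

theorem coeff_negTrunc (f : R[T;T⁻¹]) (n : ℤ) :
    (negTrunc f).coeff n = if n < 0 then f.coeff n else 0 :=
  Finsupp.filter_apply _ _ _

@[simp]
theorem negTrunc_zero : negTrunc (0 : R[T;T⁻¹]) = 0 := by
  ext n; simp [coeff_negTrunc]

theorem negTrunc_mem_supported (f : R[T;T⁻¹]) :
    negTrunc f ∈ AddMonoidAlgebra.supported R R (Set.Iio 0) :=
  AddMonoidAlgebra.mem_supported'.2 fun n hn ↦ by rw [coeff_negTrunc, if_neg (by simpa using hn)]

theorem eq_negTrunc_sub_invert_negTrunc [IsAddTorsionFree R] {f : R[T;T⁻¹]}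
    (h : invert f = -f) : f = negTrunc f - invert (negTrunc f) := by
  have hcoeff (n : ℤ) : f.coeff (-n) = -f.coeff n := by
    rw [← invert_apply, h]; rfl
  ext n
  rw [AddMonoidAlgebra.coeff_sub, Finsupp.sub_apply, invert_apply, coeff_negTrunc, coeff_negTrunc]
  rcases lt_trichotomy n 0 with hn | rfl | hn
  · rw [if_pos hn, if_neg (by omega), sub_zero]
  · simpa using self_eq_neg.1 (by simpa using hcoeff 0)
  · rw [if_neg (by omega), if_pos (by omega), hcoeff, zero_sub, neg_neg]

end LaurentPolynomial

open Finsupp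

section BarInvolution

variable {I : Type*} {bar : (I →₀ ℤ[T;T⁻¹]) →+ (I →₀ ℤ[T;T⁻¹])}

theorem map_T_smul (hq : ∀ x, bar ((T 1 : ℤ[T;T⁻¹]) • x) = (T (-1) : ℤ[T;T⁻¹]) • bar x)
    (n : ℤ) (x : I →₀ ℤ[T;T⁻¹]) : bar ((T n : ℤ[T;T⁻¹]) • x) = (T (-n) : ℤ[T;T⁻¹]) • bar x := by
  have hq' (y : I →₀ ℤ[T;T⁻¹]) : bar ((T (-1) : ℤ[T;T⁻¹]) • y) = (T 1 : ℤ[T;T⁻¹]) • bar y := by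
    calc bar ((T (-1) : ℤ[T;T⁻¹]) • y)
        = (T 1 : ℤ[T;T⁻¹]) • (T (-1) : ℤ[T;T⁻¹]) • bar ((T (-1) : ℤ[T;T⁻¹]) • y) := by
          rw [← mul_smul, ← T_add]; simp [T_zero]
      _ = (T 1 : ℤ[T;T⁻¹]) • bar y := by rw [← hq, ← mul_smul, ← T_add]; simp [T_zero]
  induction n using Int.induction_on with
  | zero => simp [T_zero]
  | succ k ih => rw [add_comm, T_add, mul_smul, hq, ih, ← mul_smul, ← T_add]; ring_nf
  | pred k ih => rw [sub_eq_neg_add, T_add, mul_smul, hq', ih, ← mul_smul, ← T_add]; ring_nf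

theorem map_smul_eq_invert_smul
    (hq : ∀ x, bar ((T 1 : ℤ[T;T⁻¹]) • x) = (T (-1) : ℤ[T;T⁻¹]) • bar x)
    (f : ℤ[T;T⁻¹]) (x : I →₀ ℤ[T;T⁻¹]) : bar (f • x) = invert f • bar x := by
  induction f using LaurentPolynomial.induction_on' with
  | add f g hf hg => rw [add_smul, map_add, hf, hg, map_add, add_smul]
  | C_mul_T n a =>
    rw [← smul_eq_C_mul, smul_assoc, map_zsmul, map_T_smul hq, map_zsmul, invert_T, smul_assoc]

end BarInvolution

section Filtration

variable {I : Type*} (ℓ : I → ℕ)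

noncomputable def lowerSpan (n : ℕ) : Submodule ℤ[T;T⁻¹] (I →₀ ℤ[T;T⁻¹]) :=
  supported ℤ[T;T⁻¹] ℤ[T;T⁻¹] {d | ℓ d < n}

variable {ℓ}

theorem mem_lowerSpan {n : ℕ} {x : I →₀ ℤ[T;T⁻¹]} :
    x ∈ lowerSpan ℓ n ↔ ∀ d, n ≤ ℓ d → x d = 0 := by
  simp [lowerSpan, mem_supported']

theorem lowerSpan_mono {m n : ℕ} (h : m ≤ n) : lowerSpan ℓ m ≤ lowerSpan ℓ n :=
  supported_mono fun d (hd : ℓ d < m) ↦ show ℓ d < n by omega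

theorem exists_eq_add_sum_single_iff [Fintype I] {n : ℕ} {S : Submodule ℤ ℤ[T;T⁻¹]}
    {x y : I →₀ ℤ[T;T⁻¹]} :
    (∃ p : I → ℤ[T;T⁻¹], (∀ d, p d ≠ 0 → ℓ d < n) ∧ (∀ d, p d ∈ S) ∧
      x = y + ∑ d, single d (p d)) ↔ x - y ∈ lowerSpan ℓ n ∧ ∀ d, (x - y) d ∈ S := by
  constructor
  · rintro ⟨p, hlow, hS, rfl⟩
    rw [add_sub_cancel_left, ← equivFunOnFinite_symm_eq_sum]
    exact ⟨mem_lowerSpan.2 fun d hd ↦ not_not.1 fun h ↦ by have := hlow d h; omega, hS⟩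
  · rintro ⟨hlow, hS⟩
    refine ⟨⇑(x - y), fun d h ↦ ?_, hS, by rw [univ_sum_single, add_sub_cancel]⟩
    by_contra! hd
    exact h (mem_lowerSpan.1 hlow d hd)

end Filtration

section Triangular

variable {I : Type*} {ℓ : I → ℕ} {bar : (I →₀ ℤ[T;T⁻¹]) →+ (I →₀ ℤ[T;T⁻¹])}

noncomputable def invertCoeffs : (I →₀ ℤ[T;T⁻¹]) →+ (I →₀ ℤ[T;T⁻¹]) :=
  mapRange.addMonoidHom (invert : ℤ[T;T⁻¹] ≃ₐ[ℤ] ℤ[T;T⁻¹]).toAddMonoidHom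

@[simp]
theorem invertCoeffs_apply (x : I →₀ ℤ[T;T⁻¹]) (d : I) : invertCoeffs x d = invert (x d) := rfl

theorem invertCoeffs_smul (f : ℤ[T;T⁻¹]) (x : I →₀ ℤ[T;T⁻¹]) :
    invertCoeffs (f • x) = invert f • invertCoeffs x := by
  ext d; simp

theorem map_sub_invertCoeffs_mem
    (hq : ∀ x, bar ((T 1 : ℤ[T;T⁻¹]) • x) = (T (-1) : ℤ[T;T⁻¹]) • bar x)
    (hH : ∀ d, bar (single d 1) - single d 1 ∈ lowerSpan ℓ (ℓ d))
    {n : ℕ} {x : I →₀ ℤ[T;T⁻¹]} (hx : x ∈ lowerSpan ℓ (n + 1)) :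
    bar x - invertCoeffs x ∈ lowerSpan ℓ n := by
  rw [lowerSpan, supported_eq_span_single] at hx
  induction hx using Submodule.span_induction with
  | mem x hx =>
    obtain ⟨d, hd, rfl⟩ := hx
    rw [show invertCoeffs (single d 1 : I →₀ ℤ[T;T⁻¹]) = single d 1 by simp [invertCoeffs]]
    exact lowerSpan_mono (Nat.lt_succ_iff.1 hd) (hH d)
  | zero => simp
  | add x y _ _ hx hy => rw [map_add, map_add, add_sub_add_comm]; exact add_mem hx hy
  | smul f x _ hx =>
    rw [map_smul_eq_invert_smul hq, invertCoeffs_smul, ← smul_sub]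
    exact Submodule.smul_mem _ _ hx

theorem map_apply_eq_invert
    (hq : ∀ x, bar ((T 1 : ℤ[T;T⁻¹]) • x) = (T (-1) : ℤ[T;T⁻¹]) • bar x)
    (hH : ∀ d, bar (single d 1) - single d 1 ∈ lowerSpan ℓ (ℓ d))
    {n : ℕ} {x : I →₀ ℤ[T;T⁻¹]} (hx : x ∈ lowerSpan ℓ (n + 1)) {d : I} (hd : n ≤ ℓ d) :
    bar x d = invert (x d) := by
  have := mem_lowerSpan.1 (map_sub_invertCoeffs_mem hq hH hx) d hd
  rwa [Finsupp.sub_apply, invertCoeffs_apply, sub_eq_zero] at this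

theorem eq_zero_of_map_eq_self
    (hq : ∀ x, bar ((T 1 : ℤ[T;T⁻¹]) • x) = (T (-1) : ℤ[T;T⁻¹]) • bar x)
    (hH : ∀ d, bar (single d 1) - single d 1 ∈ lowerSpan ℓ (ℓ d))
    {n : ℕ} {x : I →₀ ℤ[T;T⁻¹]} (hx : x ∈ lowerSpan ℓ n) (hbar : bar x = x)
    (hneg : ∀ d, x d ∈ AddMonoidAlgebra.supported ℤ ℤ (Set.Iio 0)) : x = 0 := by
  induction n with
  | zero => exact Finsupp.ext fun d ↦ mem_lowerSpan.1 hx d (Nat.zero_le _)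
  | succ n ih =>
    refine ih (mem_lowerSpan.2 fun d hd ↦ eq_zero_of_invert_eq_self (hneg d) ?_)
    rw [← map_apply_eq_invert hq hH hx hd, hbar]

theorem exists_sub_map_eq
    (hinv : ∀ x, bar (bar x) = x)
    (hq : ∀ x, bar ((T 1 : ℤ[T;T⁻¹]) • x) = (T (-1) : ℤ[T;T⁻¹]) • bar x)
    (hH : ∀ d, bar (single d 1) - single d 1 ∈ lowerSpan ℓ (ℓ d))
    {n : ℕ} {z : I →₀ ℤ[T;T⁻¹]} (hz : z ∈ lowerSpan ℓ n) (hbar : bar z = -z) :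
    ∃ p ∈ lowerSpan ℓ n, (∀ d, p d ∈ AddMonoidAlgebra.supported ℤ ℤ (Set.Iio 0)) ∧
      p - bar p = z := by
  induction n generalizing z with
  | zero =>
    obtain rfl : z = 0 := Finsupp.ext fun d ↦ mem_lowerSpan.1 hz d (Nat.zero_le _)
    exact ⟨0, zero_mem _, fun _ ↦ zero_mem _, by simp⟩
  | succ n ih =>
    set u := z.mapRange negTrunc negTrunc_zero
    have hu : u ∈ lowerSpan ℓ (n + 1) :=
      mem_lowerSpan.2 fun d hd ↦ by simp [u, mem_lowerSpan.1 hz d hd]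
    have hlow : z - (u - bar u) ∈ lowerSpan ℓ n := mem_lowerSpan.2 fun d hd ↦ by
      have hanti : invert (z d) = -z d := by
        rw [← map_apply_eq_invert hq hH hz hd, hbar, Finsupp.neg_apply]
      rw [Finsupp.sub_apply, Finsupp.sub_apply, map_apply_eq_invert hq hH hu hd, mapRange_apply,
        ← eq_negTrunc_sub_invert_negTrunc hanti, sub_self]
    have hbar' : bar (z - (u - bar u)) = -(z - (u - bar u)) := by
      rw [map_sub, map_sub, hinv, hbar]; abel
    obtain ⟨p, hp, hneg, hpz⟩ := ih hlow hbar'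
    refine ⟨p + u, add_mem (lowerSpan_mono n.le_succ hp) hu,
      fun d ↦ add_mem (hneg d) (negTrunc_mem_supported _), ?_⟩
    rw [map_add, add_sub_add_comm, hpz, sub_add_cancel]

end Triangular

section Canonical

variable {I : Type*}

def IsCanonical (bar : (I →₀ ℤ[T;T⁻¹]) →+ (I →₀ ℤ[T;T⁻¹])) (ℓ : I → ℕ) (d : I)
    (C : I →₀ ℤ[T;T⁻¹]) : Prop :=
  bar C = C ∧ C - single d 1 ∈ lowerSpan ℓ (ℓ d) ∧
    ∀ e, (C - single d 1 : I →₀ ℤ[T;T⁻¹]) e ∈ AddMonoidAlgebra.supported ℤ ℤ (Set.Iio 0)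

variable {ℓ : I → ℕ} {bar : (I →₀ ℤ[T;T⁻¹]) →+ (I →₀ ℤ[T;T⁻¹])}

theorem exists_isCanonical
    (hinv : ∀ x, bar (bar x) = x)
    (hq : ∀ x, bar ((T 1 : ℤ[T;T⁻¹]) • x) = (T (-1) : ℤ[T;T⁻¹]) • bar x)
    (hH : ∀ d, bar (single d 1) - single d 1 ∈ lowerSpan ℓ (ℓ d)) (d : I) :
    ∃ C, IsCanonical bar ℓ d C := by
  obtain ⟨p, hp, hneg, hpz⟩ :=
    exists_sub_map_eq hinv hq hH (hH d) (by rw [map_sub, hinv]; abel)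
  refine ⟨single d 1 + p, eq_of_sub_eq_zero ?_, by simpa using hp, by simpa using hneg⟩
  rw [map_add, show bar (single d 1) + bar p - (single d 1 + p) =
    bar (single d 1) - single d 1 - (p - bar p) by abel, hpz, sub_self]

theorem IsCanonical.unique
    (hq : ∀ x, bar ((T 1 : ℤ[T;T⁻¹]) • x) = (T (-1) : ℤ[T;T⁻¹]) • bar x)
    (hH : ∀ d, bar (single d 1) - single d 1 ∈ lowerSpan ℓ (ℓ d)) {d : I}
    {C C' : I →₀ ℤ[T;T⁻¹]} (hC : IsCanonical bar ℓ d C) (hC' : IsCanonical bar ℓ d C') :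
    C = C' := by
  have hdiff : C - C' = (C - single d 1) - (C' - single d 1) := by abel
  refine sub_eq_zero.1 (eq_zero_of_map_eq_self hq hH (n := ℓ d) ?_ ?_ fun e ↦ ?_)
  · rw [hdiff]; exact sub_mem hC.2.1 hC'.2.1
  · rw [map_sub, hC.1, hC'.1]
  · rw [hdiff, Finsupp.sub_apply]; exact sub_mem (hC.2.2 e) (hC'.2.2 e)

end Canonical

/-- Lusztig's lemma: let `A` be the free `ℤ[q,q⁻¹]`-module with basis `{H_d : d ∈ I}`
(modelled as `I →₀ ℤ[q,q⁻¹]` with `H_d = single d 1`, where `q = T 1`), with a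
`ℤ`-linear involution `bar` satisfying `bar (q • x) = q⁻¹ • bar x` and
`bar H_d = H_d + ∑_{ℓ(d') < ℓ(d)} r_{d',d} H_{d'}`.  Then there is a unique family
`{C_d}` with `bar C_d = C_d` and `C_d = H_d + ∑_{ℓ(d') < ℓ(d)} p_{d',d} H_{d'}` where
each `p_{d',d}` lies in `q⁻¹ ℤ[q⁻¹]` (the `ℤ`-span of `T n`, `n ≤ -1`). -/
theorem lusztig_lemma (I : Type*) [Fintype I] (ℓ : I → ℕ)
    (bar : (I →₀ LaurentPolynomial ℤ) →+ (I →₀ LaurentPolynomial ℤ))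
    (hinv : ∀ x, bar (bar x) = x)
    (hq : ∀ x, bar ((T 1 : LaurentPolynomial ℤ) • x) =
      (T (-1) : LaurentPolynomial ℤ) • bar x)
    (hH : ∀ d : I, ∃ r : I → LaurentPolynomial ℤ,
      (∀ d', r d' ≠ 0 → ℓ d' < ℓ d) ∧
      bar (Finsupp.single d 1) =
        Finsupp.single d 1 + ∑ d', Finsupp.single d' (r d')) :
    ∃! C : I → (I →₀ LaurentPolynomial ℤ),
      ∀ d, bar (C d) = C d ∧
        ∃ p : I → LaurentPolynomial ℤ,
          (∀ d', p d' ≠ 0 → ℓ d' < ℓ d) ∧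
          (∀ d', p d' ∈ Submodule.span ℤ
            {x : LaurentPolynomial ℤ | ∃ n : ℤ, n ≤ -1 ∧ x = T n}) ∧
          C d = Finsupp.single d 1 + ∑ d', Finsupp.single d' (p d') := by
  have hH' (d : I) : bar (single d 1) - single d 1 ∈ lowerSpan ℓ (ℓ d) := by
    obtain ⟨r, hr, hbar⟩ := hH d
    exact (exists_eq_add_sum_single_iff (S := ⊤).1 ⟨r, hr, fun _ ↦ trivial, hbar⟩).1
  rw [span_T_neg_eq_supported]
  simp only [exists_eq_add_sum_single_iff]
  change ∃! C : I → (I →₀ ℤ[T;T⁻¹]), ∀ d, IsCanonical bar ℓ d (C d)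
  choose C hC using exists_isCanonical hinv hq hH'
  exact ⟨C, hC, fun C' hC' ↦ funext fun d ↦ (hC' d).unique hq hH' (hC d)⟩
end
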